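/- arXiv:2001.07498 — 4 statements merged into one kernel-verified Lean document; each statement's English description precedes it below -/
import Mathlib

section
/- The 3-dimensional ℂ-algebra M³₀₁ with basis e₁, e₂, e₃ and multiplication determined bilinearly by e₁e₁ = e₂, e₁e₂ = e₃, e₂e₁ = e₃, and all other products of basis elements zero, satisfies all four Moufang identities, i.e. M³₀₁ is a Moufang algebra. -/
/-!
Every product of three elements of `M³₀₁` in either bracketing is `x₀y₀z₀ e₃`, so the algebra is
associative, and in an associative algebra both sides of each Moufang identity reassociate to the
same words.
-/

/-- The four Moufang identities for a binary multiplication `m` on an additive group. -/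
def MoufangMulOn {B : Type*} [AddCommGroup B] (m : B → B → B) : Prop :=
  (∀ x y z, m (m x y) z - m x (m y z) = -(m (m z y) x - m z (m y x))) ∧
  (∀ x y z t, m (m (m x y) z) t + m (m (m z y) x) t = m x (m y (m z t)) + m z (m y (m x t))) ∧
  (∀ x y z t, m t (m x (m y z)) + m t (m z (m y x)) = m (m (m t x) y) z + m (m (m t z) y) x) ∧
  (∀ x y z t, m (m x y) (m t z) + m (m z y) (m t x) = m (m x (m y t)) z + m (m z (m y t)) x)

/-- The multiplication of the algebra `M³₀₁` on `ℂ³` (basis `e₁ = coord 0`, `e₂ = coord 1`,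
`e₃ = coord 2`), determined bilinearly by `e₁e₁ = e₂`, `e₁e₂ = e₃`, `e₂e₁ = e₃`. -/
def m301mul (x y : Fin 3 → ℂ) : Fin 3 → ℂ :=
  ![0, x 0 * y 0, x 0 * y 1 + x 1 * y 0]

theorem moufangMulOn_of_assoc {B : Type*} [AddCommGroup B] {m : B → B → B}
    (assoc : ∀ x y z, m (m x y) z = m x (m y z)) : MoufangMulOn m :=
  ⟨fun _ _ _ => by simp only [assoc, sub_self, neg_zero],
    fun _ _ _ _ => by simp only [assoc],
    fun _ _ _ _ => by simp only [assoc],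
    fun _ _ _ _ => by simp only [assoc]⟩

theorem m301mul_assoc (x y z : Fin 3 → ℂ) :
    m301mul (m301mul x y) z = m301mul x (m301mul y z) := by
  funext i
  fin_cases i <;> simp [m301mul, mul_assoc]

/-- The algebra `M³₀₁` satisfies all four Moufang identities. -/
theorem m301_isMoufang : MoufangMulOn m301mul :=
  moufangMulOn_of_assoc m301mul_assoc
end

section
/- A bilinear form θ : M³₀₁ × M³₀₁ → ℂ is a Moufang cocycle (θ ∈ Z²(M³₀₁,ℂ)) if and only if θ lies in the linear span of Δ₁₁, Δ₁₂ + Δ₂₁, and Δ₁₃ + Δ₂₂ + Δ₃₁. -/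
/-- The bilinear form `Δᵢⱼ` on `ℂ³` with `Δᵢⱼ(e_l, e_k) = δᵢl·δⱼk`. -/
noncomputable def delta3 (i j : Fin 3) : (Fin 3 → ℂ) →ₗ[ℂ] (Fin 3 → ℂ) →ₗ[ℂ] ℂ :=
  LinearMap.mk₂ ℂ (fun x y => x i * y j)
    (fun m₁ m₂ n => by simp [add_mul])
    (fun c m n => by simp only [Pi.smul_apply, smul_eq_mul]; ring)
    (fun m n₁ n₂ => by simp [mul_add])
    (fun c m n => by simp only [Pi.smul_apply, smul_eq_mul]; ring)

/-- The four Moufang cocycle conditions for a bilinear form `θ` with respect to a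
multiplication `m` on `ℂ³`. -/
def IsMoufangCocycleOn (m : (Fin 3 → ℂ) → (Fin 3 → ℂ) → (Fin 3 → ℂ))
    (θ : (Fin 3 → ℂ) →ₗ[ℂ] (Fin 3 → ℂ) →ₗ[ℂ] ℂ) : Prop :=
  (∀ x y z, θ (m x y) z - θ x (m y z) + θ (m z y) x - θ z (m y x) = 0) ∧
  (∀ x y z t, θ (m (m x y) z) t + θ (m (m z y) x) t = θ x (m y (m z t)) + θ z (m y (m x t))) ∧
  (∀ x y z t, θ t (m x (m y z)) + θ t (m z (m y x)) = θ (m (m t x) y) z + θ (m (m t z) y) x) ∧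
  (∀ x y z t, θ (m x y) (m t z) + θ (m z y) (m t x) = θ (m x (m y t)) z + θ (m z (m y t)) x)

/-- `Z²(A, ℂ)` for the algebra `A = (ℂ³, m)`. -/
def moufangCocycles (m : (Fin 3 → ℂ) → (Fin 3 → ℂ) → (Fin 3 → ℂ)) :
    Submodule ℂ ((Fin 3 → ℂ) →ₗ[ℂ] (Fin 3 → ℂ) →ₗ[ℂ] ℂ) where
  carrier := {θ | IsMoufangCocycleOn m θ}
  zero_mem' := ⟨by simp, by simp, by simp, by simp⟩
  add_mem' := by
    rintro a b ⟨a₁, a₂, a₃, a₄⟩ ⟨b₁, b₂, b₃, b₄⟩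
    refine ⟨fun x y z => ?_, fun x y z t => ?_, fun x y z t => ?_, fun x y z t => ?_⟩ <;>
      simp only [LinearMap.add_apply]
    · linear_combination a₁ x y z + b₁ x y z
    · linear_combination a₂ x y z t + b₂ x y z t
    · linear_combination a₃ x y z t + b₃ x y z t
    · linear_combination a₄ x y z t + b₄ x y z t
  smul_mem' := by
    rintro c a ⟨a₁, a₂, a₃, a₄⟩
    refine ⟨fun x y z => ?_, fun x y z t => ?_, fun x y z t => ?_, fun x y z t => ?_⟩ <;>
      simp only [LinearMap.smul_apply, smul_eq_mul]
    · linear_combination c * a₁ x y z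
    · linear_combination c * a₂ x y z t
    · linear_combination c * a₃ x y z t
    · linear_combination c * a₄ x y z t

@[simp]
lemma delta3_apply (i j : Fin 3) (x y : Fin 3 → ℂ) : delta3 i j x y = x i * y j :=
  rfl

lemma span_deltas_le_moufangCocycles_m301 :
    Submodule.span ℂ
        ({delta3 0 0, delta3 0 1 + delta3 1 0, delta3 0 2 + delta3 1 1 + delta3 2 0} :
          Set ((Fin 3 → ℂ) →ₗ[ℂ] (Fin 3 → ℂ) →ₗ[ℂ] ℂ)) ≤ moufangCocycles m301mul := by
  rw [Submodule.span_le]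
  rintro θ (rfl | rfl | rfl) <;> refine ⟨?_, ?_, ?_, ?_⟩ <;> intros <;>
    simp [m301mul] <;> ring

section StandardBasis

local notation "e" => fun i : Fin 3 => (Pi.single i (1 : ℂ) : Fin 3 → ℂ)

lemma m301mul_single_zero_single_zero : m301mul (e 0) (e 0) = e 1 := by
  ext k; fin_cases k <;> simp [m301mul]

lemma m301mul_single_zero_single_one : m301mul (e 0) (e 1) = e 2 := by
  ext k; fin_cases k <;> simp [m301mul]

lemma m301mul_single_one_single_zero : m301mul (e 1) (e 0) = e 2 := by
  ext k; fin_cases k <;> simp [m301mul]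

lemma m301mul_single_two_left (y : Fin 3 → ℂ) : m301mul (e 2) y = 0 := by
  ext k; fin_cases k <;> simp [m301mul]

lemma m301mul_single_two_right (x : Fin 3 → ℂ) : m301mul x (e 2) = 0 := by
  ext k; fin_cases k <;> simp [m301mul]

lemma m301mul_zero_right (x : Fin 3 → ℂ) : m301mul x 0 = 0 := by
  ext k; fin_cases k <;> simp [m301mul]

namespace IsMoufangCocycleOn

variable {θ : (Fin 3 → ℂ) →ₗ[ℂ] (Fin 3 → ℂ) →ₗ[ℂ] ℂ} (h : IsMoufangCocycleOn m301mul θ)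
include h

lemma m301_apply_single_one_single_zero : θ (e 1) (e 0) = θ (e 0) (e 1) := by
  have h₁ := h.1 (e 0) (e 0) (e 0)
  simp only [m301mul_single_zero_single_zero] at h₁
  linear_combination h₁ / 2

lemma m301_apply_single_two_single_zero : θ (e 2) (e 0) = θ (e 0) (e 2) := by
  have h₁ := h.1 (e 0) (e 0) (e 1)
  simp only [m301mul_single_zero_single_zero, m301mul_single_zero_single_one,
    m301mul_single_one_single_zero] at h₁
  linear_combination h₁

lemma m301_apply_single_one_single_one : θ (e 1) (e 1) = θ (e 0) (e 2) := by
  have h₄ := h.2.2.2 (e 0) (e 0) (e 0) (e 0)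
  simp only [m301mul_single_zero_single_zero, m301mul_single_zero_single_one] at h₄
  linear_combination h₄ / 2 + m301_apply_single_two_single_zero h

lemma m301_apply_single_two_single_one : θ (e 2) (e 1) = 0 := by
  have h₂ := h.2.1 (e 0) (e 0) (e 0) (e 1)
  simp only [m301mul_single_zero_single_zero, m301mul_single_one_single_zero,
    m301mul_single_zero_single_one, m301mul_single_two_right, map_zero] at h₂
  linear_combination h₂ / 2

lemma m301_apply_single_one_single_two : θ (e 1) (e 2) = 0 := by
  have h₃ := h.2.2.1 (e 0) (e 0) (e 0) (e 1)
  simp only [m301mul_single_zero_single_zero, m301mul_single_one_single_zero,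
    m301mul_single_zero_single_one, m301mul_single_two_left, map_zero,
    LinearMap.zero_apply] at h₃
  linear_combination h₃ / 2

lemma m301_apply_single_two_single_two : θ (e 2) (e 2) = 0 := by
  have h₂ := h.2.1 (e 0) (e 0) (e 0) (e 2)
  simp only [m301mul_single_zero_single_zero, m301mul_single_one_single_zero,
    m301mul_single_two_right, m301mul_zero_right, map_zero] at h₂
  linear_combination h₂ / 2

lemma m301_eq_sum_smul_deltas :
    θ = θ (e 0) (e 0) • delta3 0 0 + θ (e 0) (e 1) • (delta3 0 1 + delta3 1 0)
      + θ (e 0) (e 2) • (delta3 0 2 + delta3 1 1 + delta3 2 0) := by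
  refine LinearMap.ext_basis (Pi.basisFun ℂ (Fin 3)) (Pi.basisFun ℂ (Fin 3)) fun i j => ?_
  fin_cases i <;> fin_cases j <;>
    simp [m301_apply_single_one_single_zero h, m301_apply_single_two_single_zero h,
      m301_apply_single_one_single_one h, m301_apply_single_two_single_one h,
      m301_apply_single_one_single_two h, m301_apply_single_two_single_two h]

end IsMoufangCocycleOn

end StandardBasis

/-- A bilinear form on `M³₀₁` is a Moufang cocycle iff it lies in the span of
`Δ₁₁`, `Δ₁₂ + Δ₂₁`, `Δ₁₃ + Δ₂₂ + Δ₃₁`. -/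
theorem m301_cocycle_iff (θ : (Fin 3 → ℂ) →ₗ[ℂ] (Fin 3 → ℂ) →ₗ[ℂ] ℂ) :
    IsMoufangCocycleOn m301mul θ ↔
      θ ∈ Submodule.span ℂ
        ({delta3 0 0, delta3 0 1 + delta3 1 0, delta3 0 2 + delta3 1 1 + delta3 2 0} :
          Set ((Fin 3 → ℂ) →ₗ[ℂ] (Fin 3 → ℂ) →ₗ[ℂ] ℂ)) := by
  refine ⟨fun h => ?_, fun h => span_deltas_le_moufangCocycles_m301 h⟩
  rw [h.m301_eq_sum_smul_deltas]
  refine add_mem (add_mem ?_ ?_) ?_ <;>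
    exact Submodule.smul_mem _ _ (Submodule.subset_span (by simp))
end

section
/- A bilinear form θ : M³₀₁ × M³₀₁ → ℂ is a coboundary (i.e. there exists a ℂ-linear map f : M³₀₁ → ℂ with θ(x,y) = f(x·y) for all x,y) if and only if θ lies in the linear span of Δ₁₁ and Δ₁₂ + Δ₂₁. -/
theorem exists_comp_eq_iff_mem_span_range {K M N W ι : Type*} [Field K] [Fintype ι]
    [AddCommGroup M] [Module K M] [AddCommGroup N] [Module K N] [AddCommGroup W] [Module K W]
    {μ : M → N → W} {B : ι → M →ₗ[K] N →ₗ[K] K} {w : ι → W} (hw : LinearIndependent K w)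
    (hμ : ∀ x y, μ x y = ∑ i, B i x y • w i) (θ : M →ₗ[K] N →ₗ[K] K) :
    (∃ f : W →ₗ[K] K, ∀ x y, θ x y = f (μ x y)) ↔ θ ∈ Submodule.span K (Set.range B) := by
  rw [Submodule.mem_span_range_iff_exists_fun]
  constructor
  · rintro ⟨f, hf⟩
    refine ⟨fun i => f (w i), LinearMap.ext₂ fun x y => ?_⟩
    simp [hf, hμ, LinearMap.sum_apply, mul_comm]
  · rintro ⟨c, rfl⟩
    obtain ⟨g, hg⟩ := (Fintype.linearCombination K w).exists_leftInverse_of_injective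
      (LinearMap.ker_eq_bot.mpr hw.fintypeLinearCombination_injective)
    have hgμ (x : M) (y : N) : g (μ x y) = fun i => B i x y := by
      rw [hμ, ← Fintype.linearCombination_apply, ← LinearMap.comp_apply, hg, LinearMap.id_apply]
    refine ⟨Fintype.linearCombination K c ∘ₗ g, fun x y => ?_⟩
    simp [hgμ, LinearMap.sum_apply, Fintype.linearCombination_apply, mul_comm]

theorem m301mul_eq (x y : Fin 3 → ℂ) :
    m301mul x y = delta3 0 0 x y • Pi.single 1 1 + (delta3 0 1 + delta3 1 0) x y • Pi.single 2 1 := by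
  ext i
  fin_cases i <;> simp [m301mul, delta3]

/-- A bilinear form on `M³₀₁` is a coboundary (of the form `δf(x,y) = f(x·y)` for a linear
`f : M³₀₁ → ℂ`) iff it lies in the span of `Δ₁₁` and `Δ₁₂ + Δ₂₁`. -/
theorem m301_coboundary_iff (θ : (Fin 3 → ℂ) →ₗ[ℂ] (Fin 3 → ℂ) →ₗ[ℂ] ℂ) :
    (∃ f : (Fin 3 → ℂ) →ₗ[ℂ] ℂ, ∀ x y, θ x y = f (m301mul x y)) ↔
      θ ∈ Submodule.span ℂ
        ({delta3 0 0, delta3 0 1 + delta3 1 0} :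
          Set ((Fin 3 → ℂ) →ₗ[ℂ] (Fin 3 → ℂ) →ₗ[ℂ] ℂ)) := by
  rw [← Matrix.range_cons_cons_empty _ _ ![]]
  have hw : LinearIndependent ℂ ![(Pi.single 1 1 : Fin 3 → ℂ), Pi.single 2 1] := by
    convert (Pi.basisFun ℂ (Fin 3)).linearIndependent.comp ![1, 2] (by decide) using 1
    ext i : 1
    fin_cases i <;> simp
  refine exists_comp_eq_iff_mem_span_range hw (fun x y => ?_) θ
  simp [Fin.sum_univ_two, m301mul_eq]
end

section
/- A ℂ-linear map φ : M³₀₁ → M³₀₁ is an algebra automorphism of M³₀₁ (a bijective linear map with φ(xy) = φ(x)φ(y) for all x,y) if and only if there exist a, b, c ∈ ℂ with a ≠ 0 such that φ(e₁) = a·e₁ + b·e₂ + c·e₃, φ(e₂) = a²·e₂ + 2ab·e₃, and φ(e₃) = a³·e₃. -/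
/-- The basis vector `e₁` of `M³₀₁`. -/
def E1 : Fin 3 → ℂ := ![1, 0, 0]
/-- The basis vector `e₂` of `M³₀₁`. -/
def E2 : Fin 3 → ℂ := ![0, 1, 0]
/-- The basis vector `e₃` of `M³₀₁`. -/
def E3 : Fin 3 → ℂ := ![0, 0, 1]

lemma eq_smul_E1_add_smul_E2_add_smul_E3 (x : Fin 3 → ℂ) :
    x = x 0 • E1 + x 1 • E2 + x 2 • E3 := by
  funext i; fin_cases i <;> simp [E1, E2, E3]

lemma E3_ne_zero : E3 ≠ 0 := fun h => by simpa [E3] using congrFun h 2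

lemma m301mul_E1_E1 : m301mul E1 E1 = E2 := by
  funext i; fin_cases i <;> simp [m301mul, E1, E2]

lemma m301mul_E1_E2 : m301mul E1 E2 = E3 := by
  funext i; fin_cases i <;> simp [m301mul, E1, E2, E3]

lemma m301mul_self (v : Fin 3 → ℂ) :
    m301mul v v = v 0 ^ 2 • E2 + (2 * v 0 * v 1) • E3 := by
  funext i; fin_cases i <;> simp [m301mul, E2, E3] <;> ring

lemma m301mul_m301mul_self (v : Fin 3 → ℂ) :
    m301mul v (m301mul v v) = v 0 ^ 3 • E3 := by
  funext i; fin_cases i <;> simp [m301mul, E3]; ring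

/-- The candidate automorphism with parameters `a, b, c`, written in coordinates. -/
def m301AutMap (a b c : ℂ) (x : Fin 3 → ℂ) : Fin 3 → ℂ :=
  ![a * x 0, b * x 0 + a ^ 2 * x 1, c * x 0 + 2 * a * b * x 1 + a ^ 3 * x 2]

lemma m301AutMap_m301mul (a b c : ℂ) (x y : Fin 3 → ℂ) :
    m301AutMap a b c (m301mul x y) = m301mul (m301AutMap a b c x) (m301AutMap a b c y) := by
  funext i; fin_cases i <;> simp [m301AutMap, m301mul] <;> ring

lemma m301AutMap_injective {a : ℂ} (ha : a ≠ 0) (b c : ℂ) :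
    Function.Injective (m301AutMap a b c) := by
  intro x y hxy
  have h0 := congrFun hxy 0
  have h1 := congrFun hxy 1
  have h2 := congrFun hxy 2
  simp only [m301AutMap, Matrix.cons_val_zero, Matrix.cons_val_one, Matrix.cons_val_two,
    Matrix.head_cons, Matrix.tail_cons] at h0 h1 h2
  have e0 : x 0 = y 0 := mul_left_cancel₀ ha h0
  have e1 : x 1 = y 1 := mul_left_cancel₀ (pow_ne_zero 2 ha) (by linear_combination h1 - b * e0)
  have e2 : x 2 = y 2 := mul_left_cancel₀ (pow_ne_zero 3 ha)
    (by linear_combination h2 - c * e0 - 2 * a * b * e1)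
  funext i; fin_cases i <;> assumption

lemma coe_eq_m301AutMap {φ : (Fin 3 → ℂ) →ₗ[ℂ] (Fin 3 → ℂ)} {a b c : ℂ}
    (h1 : φ E1 = a • E1 + b • E2 + c • E3) (h2 : φ E2 = a ^ 2 • E2 + (2 * a * b) • E3)
    (h3 : φ E3 = a ^ 3 • E3) : ⇑φ = m301AutMap a b c := by
  funext x
  conv_lhs => rw [eq_smul_E1_add_smul_E2_add_smul_E3 x]
  simp only [map_add, map_smul, h1, h2, h3]
  funext i; fin_cases i <;> simp [m301AutMap, E1, E2, E3] <;> ring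

/-- A linear map `φ : M³₀₁ → M³₀₁` is an algebra automorphism iff for some `a ≠ 0` and
`b, c ∈ ℂ` it sends `e₁ ↦ a e₁ + b e₂ + c e₃`, `e₂ ↦ a² e₂ + 2ab e₃`, `e₃ ↦ a³ e₃`. -/
theorem m301_automorphism_iff (φ : (Fin 3 → ℂ) →ₗ[ℂ] (Fin 3 → ℂ)) :
    (Function.Bijective φ ∧ ∀ x y, φ (m301mul x y) = m301mul (φ x) (φ y)) ↔
      ∃ a b c : ℂ, a ≠ 0 ∧
        φ E1 = a • E1 + b • E2 + c • E3 ∧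
        φ E2 = a ^ 2 • E2 + (2 * a * b) • E3 ∧
        φ E3 = a ^ 3 • E3 := by
  constructor
  · rintro ⟨hbij, hmul⟩
    have h2 : φ E2 = m301mul (φ E1) (φ E1) := by rw [← hmul, m301mul_E1_E1]
    have h3 : φ E3 = m301mul (φ E1) (m301mul (φ E1) (φ E1)) := by
      rw [← h2, ← hmul, m301mul_E1_E2]
    refine ⟨φ E1 0, φ E1 1, φ E1 2, fun ha => E3_ne_zero (hbij.injective ?_),
      eq_smul_E1_add_smul_E2_add_smul_E3 (φ E1), h2.trans (m301mul_self _),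
      h3.trans (m301mul_m301mul_self _)⟩
    rw [map_zero, h3, m301mul_m301mul_self, ha, zero_pow three_ne_zero, zero_smul]
  · rintro ⟨a, b, c, ha, h1, h2, h3⟩
    have hφ := coe_eq_m301AutMap h1 h2 h3
    have hinj : Function.Injective φ := hφ ▸ m301AutMap_injective ha b c
    refine ⟨⟨hinj, LinearMap.injective_iff_surjective.mp hinj⟩, fun x y => ?_⟩
    rw [hφ]
    exact m301AutMap_m301mul a b c x y
end
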